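/- arXiv:2605.16124 — 2 statements merged into one kernel-verified Lean document; each statement's English description precedes it below -/
import Mathlib

section
/- Let A be a unital commutative ℝ-algebra generated (as an algebra) by a₁,…,a_m, and L : A → ℝ positive semidefinite linear with L(1)=1. The following are equivalent: (i) v_L(a₁² + ⋯ + a_m²) < ∞; (ii) v_L(a_j) < ∞ for all j ∈ {1,…,m}; (iii) v_L(a) < ∞ for all a ∈ A. Moreover, under (i), v_L(a_j) ≤ sqrt(v_L(a₁² + ⋯ + a_m²)) for each j. -/
open MeasureTheory

variable {A : Type*} [CommRing A] [Algebra ℝ A]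

/-- The set of ratios `L(a^{2n+2})/L(a^{2n})` over `n` with `L(a^{2n}) ≠ 0`. -/
def ratioSet (L : A →ₗ[ℝ] ℝ) (a : A) : Set ℝ :=
  {r | ∃ n : ℕ, L (a ^ (2 * n)) ≠ 0 ∧ r = L (a ^ (2 * n + 2)) / L (a ^ (2 * n))}

/-- `v_L(a) = sqrt( sup_{n, L(a^{2n}) ≠ 0} L(a^{2n+2})/L(a^{2n}) )`. -/
noncomputable def vL (L : A →ₗ[ℝ] ℝ) (a : A) : ℝ :=
  Real.sqrt (sSup (ratioSet L a))

/-- The set of (underlying functions of) ℝ-algebra homomorphisms `A → ℝ`,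
as a subset of `A → ℝ` with the topology of pointwise convergence. -/
def charSet (A : Type*) [CommRing A] [Algebra ℝ A] : Set (A → ℝ) :=
  {φ | ∃ ψ : A →ₐ[ℝ] ℝ, ⇑ψ = φ}

/-! The sequence `n ↦ L(x^{2n})` is log-convex by Cauchy–Schwarz, so its ratios increase; hence
`c ≥ 0` bounds `ratioSet L x` exactly when `L(x^{2n}) ≤ cⁿ` for all `n`. Cauchy–Schwarz also gives
`L(x^i y^j) ≤ s^i t^j` when `L(x^{2n}) ≤ s^{2n}` and `L(y^{2n}) ≤ t^{2n}`, so such moment bounds pass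
to `x + y` (with `s + t`, via the binomial theorem) and to `x * y` (with `s t`), hence from the
generators to all of `A`. Conversely, for `b = ∑ aᵢ²` the element `bⁿ - aⱼ^{2n}` is a sum of
squares, so `L(aⱼ^{2n}) ≤ L(bⁿ) ≤ v_L(b)ⁿ`. -/

open Filter Topology

theorem le_of_forall_pow_mul_le {r c a b : ℝ} (hc : 0 ≤ c) (ha : 0 < a)
    (h : ∀ k : ℕ, r ^ k * a ≤ b * c ^ k) : r ≤ c := by
  by_contra! hcr
  have hr : 0 < r := hc.trans_lt hcr
  have hlim : Tendsto (fun k : ℕ => b * (c / r) ^ k) atTop (𝓝 (b * 0)) :=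
    (tendsto_pow_atTop_nhds_zero_of_lt_one (div_nonneg hc hr.le)
      ((div_lt_one hr).2 hcr)).const_mul b
  have hle : ∀ k : ℕ, a ≤ b * (c / r) ^ k := fun k => by
    rw [div_pow, ← mul_div_assoc, le_div_iff₀ (pow_pos hr k), mul_comm]
    exact h k
  exact ha.not_ge (by simpa using ge_of_tendsto' hlim hle)

theorem pow_div_mul_le_of_sq_le_mul {t : ℕ → ℝ} (hlc : ∀ k, t (k + 1) ^ 2 ≤ t k * t (k + 2))
    {n : ℕ} (hn : 0 < t n) (hn1 : 0 < t (n + 1)) (k : ℕ) :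
    (t (n + 1) / t n) ^ k * t n ≤ t (n + k) := by
  set r := t (n + 1) / t n
  have hr : 0 < r := div_pos hn1 hn
  have step : ∀ k, 0 < t (n + k) ∧ r * t (n + k) ≤ t (n + k + 1) := by
    intro k
    induction k with
    | zero => exact ⟨hn, (div_mul_cancel₀ _ hn.ne').le⟩
    | succ k ih =>
      obtain ⟨hpos, hle⟩ := ih
      have hpos' : 0 < t (n + k + 1) := (mul_pos hr hpos).trans_le hle
      refine ⟨hpos', le_of_mul_le_mul_left ?_ hpos⟩
      calc t (n + k) * (r * t (n + k + 1)) = r * t (n + k) * t (n + k + 1) := by ring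
        _ ≤ t (n + k + 1) ^ 2 := by rw [sq]; exact mul_le_mul_of_nonneg_right hle hpos'.le
        _ ≤ t (n + k) * t (n + k + 2) := hlc _
  induction k with
  | zero => simp
  | succ k ih =>
    calc r ^ (k + 1) * t n = r * (r ^ k * t n) := by ring
      _ ≤ r * t (n + k) := mul_le_mul_of_nonneg_left ih hr.le
      _ ≤ t (n + k + 1) := (step k).2

theorem IsSumSq.pow {R : Type*} [CommSemiring R] {x : R} (hx : IsSumSq x) (n : ℕ) :
    IsSumSq (x ^ n) := by
  simpa using pow_mem (show x ∈ Subsemiring.sumSq R by simpa) n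

theorem isSumSq_pow_sub_pow {R : Type*} [CommRing R] {x y : R} (hy : IsSumSq y)
    (hxy : IsSumSq (x - y)) (n : ℕ) : IsSumSq (x ^ n - y ^ n) := by
  have hx : IsSumSq x := by simpa using hxy.add hy
  rw [← geom_sum₂_mul]
  exact (IsSumSq.sum fun i _ => (hx.pow i).mul (hy.pow _)).mul hxy

section PositiveFunctional

variable (L : A →ₗ[ℝ] ℝ)

theorem map_nonneg_of_isSumSq (hpsd : ∀ x : A, 0 ≤ L (x ^ 2)) {x : A} (hx : IsSumSq x) :
    0 ≤ L x := by
  induction hx with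
  | zero => simp
  | sq_add a _ ih => rw [map_add, ← sq]; exact add_nonneg (hpsd a) ih

theorem map_pow_le_map_pow_of_isSumSq_sub (hpsd : ∀ x : A, 0 ≤ L (x ^ 2)) {x y : A}
    (hy : IsSumSq y) (hxy : IsSumSq (x - y)) (n : ℕ) : L (y ^ n) ≤ L (x ^ n) :=
  sub_nonneg.1 <| by
    simpa only [map_sub] using map_nonneg_of_isSumSq L hpsd (isSumSq_pow_sub_pow hy hxy n)

theorem map_mul_sq_le (hpsd : ∀ x : A, 0 ≤ L (x ^ 2)) (x y : A) :
    L (x * y) ^ 2 ≤ L (x ^ 2) * L (y ^ 2) := by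
  simpa [sq, mul_comm y x] using LinearMap.BilinForm.apply_mul_apply_le_of_forall_zero_le
    ((LinearMap.mul ℝ A).compr₂ L) (fun z => by simpa [sq] using hpsd z) x y

theorem map_pow_two_mul_nonneg (hpsd : ∀ x : A, 0 ≤ L (x ^ 2)) (x : A) (n : ℕ) :
    0 ≤ L (x ^ (2 * n)) := by
  simpa only [pow_mul'] using hpsd (x ^ n)

theorem map_pow_two_mul_sq_le (hpsd : ∀ x : A, 0 ≤ L (x ^ 2)) (x : A) (n : ℕ) :
    L (x ^ (2 * (n + 1))) ^ 2 ≤ L (x ^ (2 * n)) * L (x ^ (2 * (n + 2))) := by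
  have h := map_mul_sq_le L hpsd (x ^ n) (x ^ (n + 2))
  rwa [← pow_add, ← pow_mul', ← pow_mul', show n + (n + 2) = 2 * (n + 1) by ring] at h

theorem ratioSet_nonempty (h1 : L 1 = 1) (x : A) : (ratioSet L x).Nonempty :=
  ⟨_, 0, by simp [h1], rfl⟩

theorem ratioSet_nonneg (hpsd : ∀ x : A, 0 ≤ L (x ^ 2)) {x : A} : ∀ r ∈ ratioSet L x, 0 ≤ r := by
  rintro _ ⟨n, -, rfl⟩
  exact div_nonneg (map_pow_two_mul_nonneg L hpsd x (n + 1)) (map_pow_two_mul_nonneg L hpsd x n)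

theorem mem_upperBounds_ratioSet_iff (hpsd : ∀ x : A, 0 ≤ L (x ^ 2)) (h1 : L 1 = 1) {x : A}
    {c : ℝ} (hc : 0 ≤ c) : c ∈ upperBounds (ratioSet L x) ↔ ∀ n, L (x ^ (2 * n)) ≤ c ^ n := by
  set t : ℕ → ℝ := fun k => L (x ^ (2 * k))
  have ht : ∀ k, 0 ≤ t k := map_pow_two_mul_nonneg L hpsd x
  have hlc : ∀ k, t (k + 1) ^ 2 ≤ t k * t (k + 2) := map_pow_two_mul_sq_le L hpsd x
  constructor
  · intro hub n
    induction n with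
    | zero => simp [h1]
    | succ n ih =>
      rcases (ht n).eq_or_lt with h0 | hpos
      · have : t (n + 1) = 0 := pow_eq_zero_iff two_ne_zero |>.1 <|
          le_antisymm (by simpa [← h0] using hlc n) (sq_nonneg _)
        exact this.trans_le (by positivity)
      · calc t (n + 1) = t (n + 1) / t n * t n := (div_mul_cancel₀ _ hpos.ne').symm
          _ ≤ c * c ^ n := mul_le_mul (hub ⟨n, hpos.ne', rfl⟩) ih (ht n) hc
          _ = c ^ (n + 1) := (pow_succ' c n).symm
  · rintro hmom _ ⟨n, hn, rfl⟩
    change t (n + 1) / t n ≤ c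
    have hpos : 0 < t n := (ht n).lt_of_ne' hn
    rcases (ht (n + 1)).eq_or_lt with h0 | hpos1
    · rw [← h0, zero_div]
      exact hc
    · refine le_of_forall_pow_mul_le hc hpos (b := c ^ n) fun k => ?_
      calc _ ≤ t (n + k) := pow_div_mul_le_of_sq_le_mul hlc hpos hpos1 k
        _ ≤ c ^ (n + k) := hmom _
        _ = c ^ n * c ^ k := pow_add c n k

theorem bddAbove_ratioSet_iff (hpsd : ∀ x : A, 0 ≤ L (x ^ 2)) (h1 : L 1 = 1) {x : A} :
    BddAbove (ratioSet L x) ↔ ∃ s, 0 ≤ s ∧ ∀ n, L (x ^ (2 * n)) ≤ s ^ (2 * n) := by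
  simp only [pow_mul (M := ℝ)]
  constructor
  · rintro ⟨c, hc⟩
    have hc' : max c 0 ∈ upperBounds (ratioSet L x) := fun r hr => (hc hr).trans (le_max_left _ _)
    refine ⟨√(max c 0), Real.sqrt_nonneg _, ?_⟩
    rw [Real.sq_sqrt (le_max_right _ _)]
    exact (mem_upperBounds_ratioSet_iff L hpsd h1 (le_max_right _ _)).1 hc'
  · rintro ⟨s, -, hs⟩
    exact ⟨s ^ 2, (mem_upperBounds_ratioSet_iff L hpsd h1 (sq_nonneg s)).2 hs⟩

theorem map_pow_mul_pow_le (hpsd : ∀ x : A, 0 ≤ L (x ^ 2)) {x y : A} {s t : ℝ} (hs : 0 ≤ s)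
    (ht : 0 ≤ t) (hx : ∀ n, L (x ^ (2 * n)) ≤ s ^ (2 * n))
    (hy : ∀ n, L (y ^ (2 * n)) ≤ t ^ (2 * n)) (i j : ℕ) : L (x ^ i * y ^ j) ≤ s ^ i * t ^ j := by
  refine le_of_sq_le_sq ?_ (by positivity)
  calc L (x ^ i * y ^ j) ^ 2 ≤ L ((x ^ i) ^ 2) * L ((y ^ j) ^ 2) := map_mul_sq_le L hpsd _ _
    _ = L (x ^ (2 * i)) * L (y ^ (2 * j)) := by rw [← pow_mul', ← pow_mul']
    _ ≤ s ^ (2 * i) * t ^ (2 * j) :=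
      mul_le_mul (hx i) (hy j) (map_pow_two_mul_nonneg L hpsd y j) (by positivity)
    _ = (s ^ i * t ^ j) ^ 2 := by ring

theorem map_pow_le (hpsd : ∀ x : A, 0 ≤ L (x ^ 2)) {x : A} {s : ℝ} (hs : 0 ≤ s)
    (hx : ∀ n, L (x ^ (2 * n)) ≤ s ^ (2 * n)) (n : ℕ) : L (x ^ n) ≤ s ^ n := by
  simpa using map_pow_mul_pow_le L hpsd hs hs hx hx n 0

theorem map_add_pow_le (hpsd : ∀ x : A, 0 ≤ L (x ^ 2)) {x y : A} {s t : ℝ} (hs : 0 ≤ s)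
    (ht : 0 ≤ t) (hx : ∀ n, L (x ^ (2 * n)) ≤ s ^ (2 * n))
    (hy : ∀ n, L (y ^ (2 * n)) ≤ t ^ (2 * n)) (N : ℕ) : L ((x + y) ^ N) ≤ (s + t) ^ N := by
  rw [add_pow, add_pow, map_sum]
  refine Finset.sum_le_sum fun k _ => ?_
  rw [← nsmul_eq_mul', map_nsmul, nsmul_eq_mul']
  exact mul_le_mul_of_nonneg_right (map_pow_mul_pow_le L hpsd hs ht hx hy _ _) (Nat.cast_nonneg _)

theorem bddAbove_ratioSet_add (hpsd : ∀ x : A, 0 ≤ L (x ^ 2)) (h1 : L 1 = 1) {x y : A}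
    (hx : BddAbove (ratioSet L x)) (hy : BddAbove (ratioSet L y)) :
    BddAbove (ratioSet L (x + y)) := by
  rw [bddAbove_ratioSet_iff L hpsd h1] at hx hy ⊢
  obtain ⟨s, hs, hxs⟩ := hx
  obtain ⟨t, ht, hyt⟩ := hy
  exact ⟨s + t, add_nonneg hs ht, fun n => map_add_pow_le L hpsd hs ht hxs hyt _⟩

theorem bddAbove_ratioSet_mul (hpsd : ∀ x : A, 0 ≤ L (x ^ 2)) (h1 : L 1 = 1) {x y : A}
    (hx : BddAbove (ratioSet L x)) (hy : BddAbove (ratioSet L y)) :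
    BddAbove (ratioSet L (x * y)) := by
  rw [bddAbove_ratioSet_iff L hpsd h1] at hx hy ⊢
  obtain ⟨s, hs, hxs⟩ := hx
  obtain ⟨t, ht, hyt⟩ := hy
  refine ⟨s * t, mul_nonneg hs ht, fun n => ?_⟩
  simpa only [mul_pow] using map_pow_mul_pow_le L hpsd hs ht hxs hyt (2 * n) (2 * n)

theorem bddAbove_ratioSet_algebraMap (hpsd : ∀ x : A, 0 ≤ L (x ^ 2)) (h1 : L 1 = 1) (r : ℝ) :
    BddAbove (ratioSet L (algebraMap ℝ A r)) := by
  refine (bddAbove_ratioSet_iff L hpsd h1).2 ⟨|r|, abs_nonneg r, fun n => ?_⟩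
  rw [← map_pow, Algebra.algebraMap_eq_smul_one, map_smul, h1, smul_eq_mul, mul_one, ← abs_pow]
  exact le_abs_self _

theorem bddAbove_ratioSet_of_mem_adjoin (hpsd : ∀ x : A, 0 ≤ L (x ^ 2)) (h1 : L 1 = 1)
    {S : Set A} (hS : ∀ a ∈ S, BddAbove (ratioSet L a)) {x : A} (hx : x ∈ Algebra.adjoin ℝ S) :
    BddAbove (ratioSet L x) := by
  induction hx using Algebra.adjoin_induction with
  | mem z hz => exact hS z hz
  | algebraMap r => exact bddAbove_ratioSet_algebraMap L hpsd h1 r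
  | add z w _ _ hz hw => exact bddAbove_ratioSet_add L hpsd h1 hz hw
  | mul z w _ _ hz hw => exact bddAbove_ratioSet_mul L hpsd h1 hz hw

theorem vL_mem_upperBounds_ratioSet_of_isSumSq_sub (hpsd : ∀ x : A, 0 ≤ L (x ^ 2))
    (h1 : L 1 = 1) {x y : A} (hxy : IsSumSq (x - y ^ 2)) (hx : BddAbove (ratioSet L x)) :
    vL L x ∈ upperBounds (ratioSet L y) := by
  set c := sSup (ratioSet L x)
  have hc : 0 ≤ c := Real.sSup_nonneg (ratioSet_nonneg L hpsd)
  have hmom : ∀ n, L (x ^ (2 * n)) ≤ √c ^ (2 * n) := fun n => by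
    rw [pow_mul √c, Real.sq_sqrt hc]
    exact (mem_upperBounds_ratioSet_iff L hpsd h1 hc).1 (fun _ hr => le_csSup hx hr) n
  rw [vL, mem_upperBounds_ratioSet_iff L hpsd h1 (Real.sqrt_nonneg c)]
  intro n
  calc L (y ^ (2 * n)) = L ((y ^ 2) ^ n) := by rw [pow_mul]
    _ ≤ L (x ^ n) := map_pow_le_map_pow_of_isSumSq_sub L hpsd (IsSquare.sq y).isSumSq hxy n
    _ ≤ √c ^ n := map_pow_le L hpsd (Real.sqrt_nonneg c) hmom n

end PositiveFunctional

theorem stmt14 (m : ℕ) (a : Fin m → A) (hgen : Algebra.adjoin ℝ (Set.range a) = ⊤)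
    (L : A →ₗ[ℝ] ℝ) (hpsd : ∀ x : A, 0 ≤ L (x ^ 2)) (h1 : L 1 = 1) :
    ((BddAbove (ratioSet L (∑ i, a i ^ 2)) ↔ ∀ j, BddAbove (ratioSet L (a j))) ∧
     ((∀ j, BddAbove (ratioSet L (a j))) ↔ ∀ x : A, BddAbove (ratioSet L x))) ∧
    (BddAbove (ratioSet L (∑ i, a i ^ 2)) →
      ∀ j, vL L (a j) ≤ Real.sqrt (vL L (∑ i, a i ^ 2))) := by
  have generators_bdd : (∀ j, BddAbove (ratioSet L (a j))) → ∀ x : A, BddAbove (ratioSet L x) :=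
    fun h x => bddAbove_ratioSet_of_mem_adjoin L hpsd h1 (Set.forall_mem_range.2 h)
      (hgen ▸ Algebra.mem_top)
  have vL_bound : BddAbove (ratioSet L (∑ i, a i ^ 2)) →
      ∀ j, vL L (∑ i, a i ^ 2) ∈ upperBounds (ratioSet L (a j)) := by
    intro h j
    refine vL_mem_upperBounds_ratioSet_of_isSumSq_sub L hpsd h1 ?_ h
    rw [← Finset.sum_erase_eq_sub (Finset.mem_univ j)]
    exact IsSumSq.sum_sq _ _
  refine ⟨⟨⟨fun h j => ⟨_, vL_bound h j⟩, fun h => generators_bdd h _⟩,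
    ⟨generators_bdd, fun h j => h (a j)⟩⟩, fun h j => ?_⟩
  exact Real.sqrt_le_sqrt (csSup_le (ratioSet_nonempty L h1 _) (vL_bound h j))
end

section
/- Let L be a positive semidefinite linear functional on a unital commutative ℝ-algebra A with L(1)=1, and a ∈ A. Then sup_{n ∈ ℕ₀, L(a^{2n})≠0} L(a^{2n+2})/L(a^{2n}) < ∞ if and only if sup_{n ∈ ℕ} (L(a^{2n}))^{1/(2n)} < ∞, and in that case sup_{n ∈ ℕ} (L(a^{2n}))^{1/(2n)} = sqrt( sup_{n ∈ ℕ₀, L(a^{2n})≠0} L(a^{2n+2})/L(a^{2n}) ). -/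
open MeasureTheory

variable {A : Type*} [CommRing A] [Algebra ℝ A]

lemma aux_rpow_le {x c : ℝ} (hx : 0 ≤ x) (N : ℕ) (hN : 0 < N)
    (h : x ^ ((1:ℝ)/(N:ℝ)) ≤ c) : x ≤ c ^ N := by
  have h2 := Real.rpow_le_rpow (Real.rpow_nonneg hx _) h (Nat.cast_nonneg N)
  rw [← Real.rpow_mul hx, one_div,
    inv_mul_cancel₀ (Nat.cast_ne_zero.mpr hN.ne' : (N:ℝ) ≠ 0), Real.rpow_one,
    Real.rpow_natCast] at h2
  exact h2

lemma aux_le_rpow {x c : ℝ} (hx : 0 ≤ x) (hc : 0 ≤ c) (N : ℕ) (hN : 0 < N)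
    (h : x ≤ c ^ N) : x ^ ((1:ℝ)/(N:ℝ)) ≤ c := by
  have h2 := Real.rpow_le_rpow hx h (by positivity : (0:ℝ) ≤ (1:ℝ)/(N:ℝ))
  rwa [← Real.rpow_natCast c N, ← Real.rpow_mul hc,
    mul_one_div, div_self (by positivity), Real.rpow_one] at h2

lemma cs (L : A →ₗ[ℝ] ℝ) (hpsd : ∀ x : A, 0 ≤ L (x ^ 2)) (x y : A) :
    L (x * y) ^ 2 ≤ L (x ^ 2) * L (y ^ 2) := by
  have hL : ∀ (t : ℝ) (z : A), L (algebraMap ℝ A t * z) = t * L z := by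
    intro t z
    rw [← Algebra.smul_def, L.map_smul, smul_eq_mul]
  have key : ∀ t : ℝ, 0 ≤ L (y^2) * (t * t) + (2 * L (x*y)) * t + L (x^2) := by
    intro t
    have h := hpsd (x + algebraMap ℝ A t * y)
    have e : (x + algebraMap ℝ A t * y)^2
        = x^2 + algebraMap ℝ A t * (x*y) + algebraMap ℝ A t * (x*y)
          + algebraMap ℝ A t * (algebraMap ℝ A t * y^2) := by ring
    rw [e] at h
    simp only [map_add, hL] at h
    nlinarith [h]
  have hd := discrim_le_zero key
  rw [discrim] at hd
  nlinarith [hd]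

section Main
variable (L : A →ₗ[ℝ] ℝ) (a : A)

lemma m_nonneg (hpsd : ∀ x : A, 0 ≤ L (x ^ 2)) (n : ℕ) : 0 ≤ L (a ^ (2 * n)) := by
  have : a ^ (2 * n) = (a ^ n) ^ 2 := by rw [← pow_mul, mul_comm]
  rw [this]; exact hpsd _

lemma m_logconvex (hpsd : ∀ x : A, 0 ≤ L (x ^ 2)) (n : ℕ) :
    L (a ^ (2 * (n+1))) ^ 2 ≤ L (a ^ (2 * n)) * L (a ^ (2 * (n+2))) := by
  have e1 : a ^ (2 * (n+1)) = a ^ n * a ^ (n+2) := by rw [← pow_add]; ring_nf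
  have e2 : a ^ (2 * n) = (a ^ n) ^ 2 := by rw [← pow_mul, mul_comm]
  have e3 : a ^ (2 * (n+2)) = (a ^ (n+2)) ^ 2 := by rw [← pow_mul, mul_comm]
  rw [e1, e2, e3]
  exact cs L hpsd _ _

/-- growth: if m n > 0 and r = m(n+1)/m n > 0 then m n * r^k ≤ m (n+k). -/
lemma m_growth (hpsd : ∀ x : A, 0 ≤ L (x ^ 2)) (n : ℕ)
    (hmn : 0 < L (a ^ (2 * n))) {r : ℝ} (hr : 0 < r)
    (hre : r = L (a ^ (2 * (n+1))) / L (a ^ (2 * n))) (k : ℕ) :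
    L (a ^ (2 * n)) * r ^ k ≤ L (a ^ (2 * (n + k))) := by
  have Q : ∀ k, 0 < L (a ^ (2 * (n+k))) ∧
      r * L (a ^ (2 * (n+k))) ≤ L (a ^ (2 * (n+k+1))) := by
    intro k
    induction k with
    | zero =>
      refine ⟨hmn, ?_⟩
      show r * L (a ^ (2 * n)) ≤ L (a ^ (2 * (n+1)))
      rw [hre, div_mul_cancel₀ _ hmn.ne']
    | succ k ih =>
      obtain ⟨hp, hq⟩ := ih
      have hp1 : 0 < L (a ^ (2 * (n+k+1))) := lt_of_lt_of_le (by positivity) hq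
      have hlc := m_logconvex L a hpsd (n+k)
      refine ⟨hp1, ?_⟩
      have h3 : r * L (a ^ (2 * (n+k+1))) * L (a ^ (2 * (n+k)))
          ≤ L (a ^ (2 * (n+k+2))) * L (a ^ (2 * (n+k))) := by
        nlinarith
      exact le_of_mul_le_mul_right h3 hp
  induction k with
  | zero => simp
  | succ k ih =>
    obtain ⟨hp, hq⟩ := Q k
    calc L (a ^ (2 * n)) * r ^ (k+1) = r * (L (a ^ (2 * n)) * r ^ k) := by ring
    _ ≤ r * L (a ^ (2 * (n+k))) := by nlinarith
    _ ≤ L (a ^ (2 * (n+k+1))) := hq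
    _ = L (a ^ (2 * (n + (k+1)))) := rfl

/-- Key A: a bound c ≥ 0 on the rpow set gives bound c² on the ratio set. -/
lemma keyA (hpsd : ∀ x : A, 0 ≤ L (x ^ 2)) {c : ℝ} (hc : 0 ≤ c)
    (hbd : ∀ r ∈ {r : ℝ | ∃ n : ℕ, 0 < n ∧ r = (L (a ^ (2 * n))) ^ ((1 : ℝ) / ((2 * n : ℕ) : ℝ))}, r ≤ c) :
    ∀ r ∈ ratioSet L a, r ≤ c ^ 2 := by
  rintro r ⟨n, hn0, rfl⟩
  have hmn : 0 < L (a ^ (2 * n)) := (m_nonneg L a hpsd n).lt_of_ne (Ne.symm hn0)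
  set m : ℕ → ℝ := fun k => L (a ^ (2 * k)) with hm
  by_contra hgt
  push_neg at hgt
  set r := L (a ^ (2 * n + 2)) / L (a ^ (2 * n)) with hrdef
  have hre : r = L (a ^ (2 * (n+1))) / L (a ^ (2 * n)) := by
    rw [hrdef]; ring_nf
  have hr0 : 0 < r := lt_of_le_of_lt (by positivity) hgt
  -- bound: for N ≥ 1, m N ≤ c ^ (2N)
  have hbd' : ∀ N : ℕ, 0 < N → L (a ^ (2 * N)) ≤ c ^ (2 * N) := by
    intro N hN
    have h := hbd _ ⟨N, hN, rfl⟩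
    exact aux_rpow_le (m_nonneg L a hpsd N) (2*N) (by omega) h
  have hgrow := m_growth L a hpsd n hmn hr0 hre
  -- c > 0
  have hc0 : 0 < c := by
    rcases hc.lt_or_eq with h | h; · exact h
    exfalso
    have h1 := hbd' (n+1) (by omega)
    have h2 := hgrow 1
    have hx : c ^ (2*(n+1)) = 0 := by rw [← h]; exact zero_pow (by omega)
    rw [hx] at h1
    nlinarith [pow_pos hr0 1]
  -- q = r / c^2 > 1
  have hq1 : 1 < r / c ^ 2 := (one_lt_div (by positivity)).mpr hgt
  obtain ⟨k0, hk0⟩ := pow_unbounded_of_one_lt ((c^2)^n / L (a ^ (2*n))) hq1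
  set k := k0 + 1 with hkdef
  have hk : (c^2)^n / L (a ^ (2*n)) < (r / c^2) ^ k :=
    hk0.trans_le (pow_le_pow_right₀ hq1.le (Nat.le_succ k0))
  have h3 := hgrow k
  have h4 := hbd' (n + k) (by omega)
  have e : c ^ (2 * (n + k)) = (c^2)^n * (c^2)^k := by
    rw [← pow_mul, ← pow_mul, ← pow_add, Nat.mul_add]
  rw [e] at h4
  have h5 : L (a ^ (2 * n)) * r ^ k ≤ (c^2)^n * (c^2)^k := le_trans h3 h4
  have h6 : (r / c^2) ^ k ≤ (c^2)^n / L (a ^ (2*n)) := by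
    rw [div_pow, div_le_div_iff₀ (by positivity) hmn]
    calc r ^ k * L (a ^ (2*n)) = L (a ^ (2 * n)) * r ^ k := by ring
    _ ≤ (c^2)^n * (c^2)^k := h5
    _ = (c ^ 2) ^ n * (c ^ 2) ^ k := rfl
  linarith [h6, hk.le]

/-- Key B: bound on ratio set gives m n ≤ (sSup R)^n for all n, hence rpow bound. -/
lemma keyB (hpsd : ∀ x : A, 0 ≤ L (x ^ 2)) (h1 : L 1 = 1) (hR : BddAbove (ratioSet L a)) :
    ∀ n : ℕ, L (a ^ (2 * n)) ≤ (sSup (ratioSet L a)) ^ n := by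
  have hm0 : L (a ^ (2 * 0)) = 1 := by simpa using h1
  have hmem : (L (a ^ (2*0+2)) / L (a ^ (2*0))) ∈ ratioSet L a :=
    ⟨0, by rw [hm0]; norm_num, rfl⟩
  have hS0 : 0 ≤ sSup (ratioSet L a) := by
    refine le_trans ?_ (le_csSup hR hmem)
    rw [hm0]
    simpa using m_nonneg L a hpsd 1
  intro n
  induction n with
  | zero =>
    have h0 : L (a ^ (2*0)) ≤ 1 := hm0.le
    simpa using h0
  | succ n ih =>
    rcases eq_or_ne (L (a ^ (2 * n))) 0 with h0 | h0
    · -- m (n+1) = 0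
      have hlc := m_logconvex L a hpsd n
      have : L (a ^ (2 * (n+1))) ^ 2 ≤ 0 := by rw [h0] at hlc; linarith
      have hz : L (a ^ (2 * (n+1))) = 0 := by nlinarith
      rw [hz]; positivity
    · have hmn : 0 < L (a ^ (2 * n)) := (m_nonneg L a hpsd n).lt_of_ne (Ne.symm h0)
      have hmem' : (L (a ^ (2*n+2)) / L (a ^ (2*n))) ∈ ratioSet L a := ⟨n, h0, rfl⟩
      have hle := le_csSup hR hmem'
      have e : L (a ^ (2 * (n+1))) = (L (a ^ (2*n+2)) / L (a ^ (2*n))) * L (a ^ (2 * n)) := by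
        rw [div_mul_cancel₀]
        · ring_nf
        · exact h0
      rw [e, pow_succ (sSup (ratioSet L a)) n]
      have hrnn : 0 ≤ L (a ^ (2*n+2)) / L (a ^ (2*n)) := by
        have : (2:ℕ)*n+2 = 2*(n+1) := by ring
        rw [this]
        exact div_nonneg (m_nonneg L a hpsd (n+1)) hmn.le
      calc (L (a ^ (2*n+2)) / L (a ^ (2*n))) * L (a ^ (2 * n))
          ≤ sSup (ratioSet L a) * (sSup (ratioSet L a)) ^ n :=
            mul_le_mul hle ih hmn.le hS0
      _ = (sSup (ratioSet L a)) ^ n * sSup (ratioSet L a) := by ring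

theorem stmt18 (L : A →ₗ[ℝ] ℝ) (hpsd : ∀ x : A, 0 ≤ L (x ^ 2)) (h1 : L 1 = 1) (a : A) :
    (BddAbove (ratioSet L a) ↔
      BddAbove {r : ℝ | ∃ n : ℕ, 0 < n ∧ r = (L (a ^ (2 * n))) ^ ((1 : ℝ) / ((2 * n : ℕ) : ℝ))}) ∧
    (BddAbove (ratioSet L a) →
      sSup {r : ℝ | ∃ n : ℕ, 0 < n ∧ r = (L (a ^ (2 * n))) ^ ((1 : ℝ) / ((2 * n : ℕ) : ℝ))} =
        Real.sqrt (sSup (ratioSet L a))) := by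
  set P := {r : ℝ | ∃ n : ℕ, 0 < n ∧ r = (L (a ^ (2 * n))) ^ ((1 : ℝ) / ((2 * n : ℕ) : ℝ))} with hP
  set R := ratioSet L a with hRdef
  have hm0 : L (a ^ (2 * 0)) = 1 := by simpa using h1
  have hRne : R.Nonempty := ⟨_, ⟨0, by rw [hm0]; norm_num, rfl⟩⟩
  have hPne : P.Nonempty := ⟨_, ⟨1, one_pos, rfl⟩⟩
  have hPnn : ∀ r ∈ P, 0 ≤ r := by
    rintro r ⟨n, hn, rfl⟩
    exact Real.rpow_nonneg (m_nonneg L a hpsd n) _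
  have hS0 : BddAbove R → 0 ≤ sSup R := by
    intro hR
    have hmem : (L (a ^ (2*0+2)) / L (a ^ (2*0))) ∈ R := ⟨0, by rw [hm0]; norm_num, rfl⟩
    refine le_trans ?_ (le_csSup hR hmem)
    rw [hm0]
    simpa using m_nonneg L a hpsd 1
  -- Key B consequence: every element of P is ≤ sqrt (sSup R)
  have hBsqrt : BddAbove R → ∀ r ∈ P, r ≤ Real.sqrt (sSup R) := by
    intro hR
    rintro r ⟨n, hn, rfl⟩
    have hmle := keyB L a hpsd h1 hR n
    have hs : (sSup R) ^ n = (Real.sqrt (sSup R)) ^ (2 * n) := by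
      rw [pow_mul, Real.sq_sqrt (hS0 hR)]
    refine aux_le_rpow (m_nonneg L a hpsd n) (Real.sqrt_nonneg _) (2*n) (by omega) ?_
    rw [← hs]; exact hmle
  constructor
  · constructor
    · intro hR
      exact ⟨Real.sqrt (sSup R), fun r hr => hBsqrt hR r hr⟩
    · rintro ⟨c, hc⟩
      have hc0 : 0 ≤ max c 0 := le_max_right _ _
      have hbd : ∀ r ∈ P, r ≤ max c 0 := fun r hr => le_trans (hc hr) (le_max_left _ _)
      exact ⟨(max c 0) ^ 2, fun r hr => keyA L a hpsd hc0 hbd r hr⟩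
  · intro hR
    have hPbdd : BddAbove P := ⟨Real.sqrt (sSup R), fun r hr => hBsqrt hR r hr⟩
    refine le_antisymm (csSup_le hPne (hBsqrt hR)) ?_
    -- sqrt (sSup R) ≤ sSup P
    have hT0 : 0 ≤ sSup P := le_csSup_of_le hPbdd hPne.choose_spec (hPnn _ hPne.choose_spec)
    have hbd : ∀ r ∈ P, r ≤ sSup P := fun r hr => le_csSup hPbdd hr
    have hRle : ∀ r ∈ R, r ≤ (sSup P) ^ 2 := keyA L a hpsd hT0 hbd
    have : sSup R ≤ (sSup P) ^ 2 := csSup_le hRne hRle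
    calc Real.sqrt (sSup R) ≤ Real.sqrt ((sSup P)^2) := Real.sqrt_le_sqrt this
    _ = sSup P := Real.sqrt_sq hT0

end Main
end
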